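/- The map φ_s : t^k f(D) ↦ Σ_{j∈ℤ} f(-j+s) E_{j-k,j} from the Lie algebra of differential operators on the circle to the Lie algebra gl_∞ of ℤ×ℤ matrices with finitely many nonzero diagonals is a homomorphism of Lie algebras for every s ∈ ℂ, where E_{ab} are matrix units, gl_∞ has the usual commutator, and 𝒟 has bracket [t^r f(D), t^s' g(D)] = t^{r+s'}(f(D+s')g(D) - f(D)g(D+r)). -/

import Mathlib

open Polynomial

noncomputable abbrev DOp := ℤ →₀ Polynomial ℂ

/-- `(t^k f(D)) ⬝ (t^l g(D)) = t^{k+l} f(D+l) g(D)`. -/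
noncomputable def DOp.mul (a b : DOp) : DOp :=
  a.sum fun k f => b.sum fun l g =>
    Finsupp.single (k + l) (f.comp (X + C (l : ℂ)) * g)

/-- The bracket `[t^r f(D), t^{s'} g(D)] = t^{r+s'}(f(D+s')g(D) - f(D)g(D+r))`. -/
noncomputable def DOp.lieb (a b : DOp) : DOp := DOp.mul a b - DOp.mul b a

/-- The natural module `⊕_{j ∈ ℤ} ℂ v_j` for `gl_∞` (matrices with finitely many nonzero
diagonals act as endomorphisms of it). -/
noncomputable abbrev Vmod := ℤ →₀ ℂ

/-- `φ_s : t^k f(D) ↦ Σ_{j∈ℤ} f(-j+s) E_{j-k,j}`, realized through its action on `Vmod`: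
`v_j ↦ f(s - j) v_{j-k}` (corresponding to `v_j = t^{-j+s}` and
`t^k f(D)·t^m = f(m) t^{m+k}`). -/
noncomputable def Phi (s : ℂ) (a : DOp) (v : Vmod) : Vmod :=
  a.sum fun k f => v.sum fun j c => Finsupp.single (j - k) (c * f.eval (s - (j : ℂ)))

lemma Phi_zero_left (s : ℂ) (v : Vmod) : Phi s 0 v = 0 := by
  simp [Phi]

lemma Phi_zero_right (s : ℂ) (a : DOp) : Phi s a 0 = 0 := by
  simp [Phi]

lemma Phi_add_left (s : ℂ) (a b : DOp) (v : Vmod) :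
    Phi s (a + b) v = Phi s a v + Phi s b v := by
  unfold Phi
  rw [Finsupp.sum_add_index']
  · intro k; simp
  · intro k f g
    rw [← Finsupp.sum_add]
    congr 1; ext j c
    simp [mul_add, Finsupp.single_add]

lemma Phi_add_right (s : ℂ) (a : DOp) (v w : Vmod) :
    Phi s a (v + w) = Phi s a v + Phi s a w := by
  unfold Phi
  rw [← Finsupp.sum_add]
  congr 1; ext k f
  rw [Finsupp.sum_add_index']
  · intro j; simp
  · intro j c d
    simp [add_mul, Finsupp.single_add]

lemma Phi_smul (s : ℂ) (c : ℂ) (a : DOp) (v : Vmod) :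
    Phi s (c • a) v = c • Phi s a v := by
  unfold Phi
  rw [Finsupp.sum_smul_index']
  · rw [Finsupp.smul_sum]
    apply Finsupp.sum_congr
    intro k _
    rw [Finsupp.smul_sum]
    apply Finsupp.sum_congr
    intro j _
    rw [Finsupp.smul_single]
    congr 1
    simp
    ring_nf
  · intro k; simp

lemma Phi_single_single (s : ℂ) (k j : ℤ) (f : Polynomial ℂ) (c : ℂ) :
    Phi s (Finsupp.single k f) (Finsupp.single j c) =
      Finsupp.single (j - k) (c * f.eval (s - (j : ℂ))) := by
  unfold Phi
  rw [Finsupp.sum_single_index, Finsupp.sum_single_index]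
  · simp
  · simp

lemma mul_zero_left (b : DOp) : DOp.mul 0 b = 0 := by simp [DOp.mul]
lemma mul_zero_right (a : DOp) : DOp.mul a 0 = 0 := by simp [DOp.mul]

lemma mul_add_left (a a' b : DOp) : DOp.mul (a + a') b = DOp.mul a b + DOp.mul a' b := by
  unfold DOp.mul
  rw [Finsupp.sum_add_index']
  · intro k; simp
  · intro k f g
    rw [← Finsupp.sum_add]
    congr 1; ext l h
    simp [add_comp, add_mul, Finsupp.single_add]

lemma mul_add_right (a b b' : DOp) : DOp.mul a (b + b') = DOp.mul a b + DOp.mul a b' := by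
  unfold DOp.mul
  rw [← Finsupp.sum_add]
  congr 1; ext k f
  rw [Finsupp.sum_add_index']
  · intro l; simp
  · intro l g g'
    simp [mul_add, Finsupp.single_add]

lemma mul_single_single (k l : ℤ) (f g : Polynomial ℂ) :
    DOp.mul (Finsupp.single k f) (Finsupp.single l g) =
      Finsupp.single (k + l) (f.comp (X + C (l : ℂ)) * g) := by
  unfold DOp.mul
  rw [Finsupp.sum_single_index, Finsupp.sum_single_index]
  · simp
  · simp

lemma Phi_mul (s : ℂ) (a b : DOp) (v : Vmod) :
    Phi s (DOp.mul a b) v = Phi s a (Phi s b v) := by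
  induction a using Finsupp.induction_linear with
  | zero => simp [mul_zero_left, Phi_zero_left]
  | add a a' ha ha' => rw [mul_add_left, Phi_add_left, ha, ha', Phi_add_left]
  | single k f =>
    induction b using Finsupp.induction_linear with
    | zero => simp [mul_zero_right, Phi_zero_left, Phi_zero_right]
    | add b b' hb hb' => rw [mul_add_right, Phi_add_left, hb, hb', Phi_add_left, Phi_add_right]
    | single l g =>
      induction v using Finsupp.induction_linear with
      | zero => simp [Phi_zero_right]
      | add v w hv hw => rw [Phi_add_right, hv, hw, Phi_add_right, Phi_add_right]
      | single j c =>
        rw [mul_single_single, Phi_single_single, Phi_single_single, Phi_single_single]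
        congr 1
        · ring
        · push_cast
          simp [eval_comp]
          ring_nf

/-- for every `s ∈ ℂ`, `φ_s` is a homomorphism of Lie algebras from `𝒟`
to `gl_∞` (realized as operators on `⊕ ℂ v_j`, with the commutator bracket): it is
`ℂ`-linear and sends the bracket of `𝒟` to the commutator. -/
theorem Phi_is_Lie_algebra_homomorphism (s : ℂ) :
    (∀ a b : DOp, ∀ v : Vmod, Phi s (a + b) v = Phi s a v + Phi s b v) ∧
    (∀ (c : ℂ) (a : DOp) (v : Vmod), Phi s (c • a) v = c • Phi s a v) ∧
    (∀ a b : DOp, ∀ v : Vmod,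
      Phi s (DOp.lieb a b) v = Phi s a (Phi s b v) - Phi s b (Phi s a v)) := by
  refine ⟨Phi_add_left s, Phi_smul s, fun a b v => ?_⟩
  have hneg : ∀ (x : DOp) (w : Vmod), Phi s (-x) w = -Phi s x w := by
    intro x w
    have := Phi_smul s (-1) x w
    simpa using this
  have hsub : Phi s (DOp.mul a b - DOp.mul b a) v
      = Phi s (DOp.mul a b) v - Phi s (DOp.mul b a) v := by
    rw [sub_eq_add_neg, Phi_add_left, hneg, ← sub_eq_add_neg]
  rw [DOp.lieb, hsub, Phi_mul, Phi_mul]
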